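/- If a 3×3 grid s with entries a permutation of {1,…,9} has prescribed diagonal, prescribed row sums, and prescribed column sums such that the sum of all row sums equals 45 (equivalently the sum of all column sums equals 45), then for two solutions s and s' = S_a and s'' = S_b (a, b nonzero, perturbations as defined) of the same problem, a and b have the same sign. -/
import Mathlib


/-- The nine entries of the grid form a permutation of `{1,…,9}`. -/
def IsFubukiFilling (s : Fin 3 → Fin 3 → ℤ) : Prop :=
  (Finset.univ.image fun p : Fin 3 × Fin 3 => s p.1 p.2) = Finset.Icc (1 : ℤ) 9

/-- The perturbed grid `S_a`. -/
def perturb (s : Fin 3 → Fin 3 → ℤ) (a : ℤ) : Fin 3 → Fin 3 → ℤ :=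
  ![![s 0 0, s 0 1 + a, s 0 2 - a],
    ![s 1 0 - a, s 1 1, s 1 2 + a],
    ![s 2 0 + a, s 2 1 - a, s 2 2]]

lemma fubuki_sumsq (s : Fin 3 → Fin 3 → ℤ) (hs : IsFubukiFilling s) :
    ∑ p : Fin 3 × Fin 3, (s p.1 p.2) ^ 2 = 285 := by
  have hcard : ((Finset.univ : Finset (Fin 3 × Fin 3)).image
      fun p : Fin 3 × Fin 3 => s p.1 p.2).card = (Finset.univ : Finset (Fin 3 × Fin 3)).card := by
    rw [hs]; rfl
  have hinj : Set.InjOn (fun p : Fin 3 × Fin 3 => s p.1 p.2)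
      (Finset.univ : Finset (Fin 3 × Fin 3)) := Finset.card_image_iff.mp hcard
  have h1 : ∑ x ∈ ((Finset.univ : Finset (Fin 3 × Fin 3)).image
      fun p : Fin 3 × Fin 3 => s p.1 p.2), x ^ 2 = ∑ p : Fin 3 × Fin 3, (s p.1 p.2) ^ 2 :=
    Finset.sum_image (fun x hx y hy h => hinj hx hy h)
  rw [hs] at h1
  rw [← h1]
  decide

theorem fubuki_perturbations_same_sign (s : Fin 3 → Fin 3 → ℤ)
    (hs : IsFubukiFilling s)
    (hsum : ∑ i, ∑ j, s i j = 45)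
    (a b : ℤ) (ha : a ≠ 0) (hb : b ≠ 0)
    (hSa : IsFubukiFilling (perturb s a))
    (hSb : IsFubukiFilling (perturb s b)) :
    a * b > 0 := by
  have h0 := fubuki_sumsq s hs
  have h1 := fubuki_sumsq _ hSa
  have h2 := fubuki_sumsq _ hSb
  simp only [Fintype.sum_prod_type, Fin.sum_univ_three, perturb, Matrix.cons_val',
    Matrix.cons_val_zero, Matrix.cons_val_one, Matrix.head_cons, Matrix.cons_val_two,
    Matrix.tail_cons, Matrix.empty_val', Matrix.cons_val_fin_one, Matrix.head_fin_const]
    at h0 h1 h2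
  have heq : a = b := by
    have ka : 2 * a * (s 0 1 - s 0 2 - s 1 0 + s 1 2 + s 2 0 - s 2 1 + 3 * a) = 0 := by
      linear_combination h1 - h0
    have kb : 2 * b * (s 0 1 - s 0 2 - s 1 0 + s 1 2 + s 2 0 - s 2 1 + 3 * b) = 0 := by
      linear_combination h2 - h0
    have ka' := (mul_eq_zero.mp ka).resolve_left (by simpa using ha)
    have kb' := (mul_eq_zero.mp kb).resolve_left (by simpa using hb)
    linarith
  rw [← heq]
  exact mul_self_pos.mpr ha
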